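/- For every finite, simple, connected, undirected graph G: if the concurrent cop number c̃(G) equals 1, then the cop number c(G) equals 1. -/

import Mathlib

open Finset Filter

noncomputable section

variable {V : Type*} [Fintype V] [DecidableEq V]

/-- The closed neighborhood `N[u]` of a vertex `u`: `u` together with its neighbors. -/
def nbhd (G : SimpleGraph V) [DecidableRel G.Adj] (u : V) : Finset V :=
  insert u (G.neighborFinset u)

lemma nbhd_nonempty (G : SimpleGraph V) [DecidableRel G.Adj] (u : V) :
    (nbhd G u).Nonempty :=
  ⟨u, Finset.mem_insert_self u _⟩

/-! ### The turn-based cops and robber game (TBCR) with `K` cops -/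

/-- A position of the `K`-cop game: the cops' locations and the robber's location. -/
abbrev PosK (V : Type*) (K : ℕ) := (Fin K → V) × V

/-- A (deterministic, history-dependent) cop strategy for TBCR: an initial placement
of the `K` cops, and a move function from histories of completed rounds. -/
abbrev TBCop (V : Type*) (K : ℕ) := (Fin K → V) × (List (PosK V K) → Fin K → V)

/-- A (deterministic, history-dependent) robber strategy for TBCR: an initial placement
(seeing the cops' placement), and a move function from histories of completed rounds
together with the cops' fresh move (the cop player moves first in each round). -/
abbrev TBRob (V : Type*) (K : ℕ) := ((Fin K → V) → V) × (List (PosK V K) → (Fin K → V) → V)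

/-- The history of completed rounds of TBCR after round `t`; each token must move within its
closed neighborhood (attempted illegal moves leave the token in place). -/
def tbPlay (G : SimpleGraph V) [DecidableRel G.Adj] {K : ℕ}
    (sc : TBCop V K) (sr : TBRob V K) : ℕ → List (PosK V K)
  | 0 => [(sc.1, sr.1 sc.1)]
  | (t+1) =>
    let h := tbPlay G sc sr t
    let p := h.getLast?.getD (sc.1, sr.1 sc.1)
    let c' : Fin K → V := fun i => if sc.2 h i ∈ nbhd G (p.1 i) then sc.2 h i else p.1 i
    let w := sr.2 h c'
    h ++ [(c', if w ∈ nbhd G p.2 then w else p.2)]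

/-- The position of the TBCR game at the end of round `t`. -/
def tbPos (G : SimpleGraph V) [DecidableRel G.Adj] {K : ℕ}
    (sc : TBCop V K) (sr : TBRob V K) (t : ℕ) : PosK V K :=
  (tbPlay G sc sr t).getLast?.getD (sc.1, sr.1 sc.1)

/-- The robber is captured in TBCR: at some time a cop occupies the robber's current
vertex (either at the end of a round, or just after the cops' half of a round). -/
def tbCaptured (G : SimpleGraph V) [DecidableRel G.Adj] {K : ℕ}
    (sc : TBCop V K) (sr : TBRob V K) : Prop :=
  ∃ t : ℕ, ∃ i : Fin K,
    (tbPos G sc sr t).1 i = (tbPos G sc sr t).2 ∨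
    (tbPos G sc sr (t+1)).1 i = (tbPos G sc sr t).2

/-- `K` cops suffice in the turn-based game: the cop player has a strategy guaranteeing
capture against every robber strategy. -/
def tbCopWin (G : SimpleGraph V) [DecidableRel G.Adj] (K : ℕ) : Prop :=
  ∃ sc : TBCop V K, ∀ sr : TBRob V K, tbCaptured G sc sr

/-- The cop number `c(G)`: the minimum `K` for which the cop player wins TBCR. -/
def copNumber (G : SimpleGraph V) [DecidableRel G.Adj] : ℕ :=
  sInf {K | tbCopWin G K}

/-! ### The concurrent cops and robber game (CCCR) with `K` cops -/

/-- A randomized cop strategy in CCCR: to each finite history it assigns a probability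
distribution over the cops' next moves. -/
abbrev CCCop (V : Type*) (K : ℕ) := List (PosK V K) → PMF (Fin K → V)

/-- A randomized robber strategy in CCCR. -/
abbrev CCRob (V : Type*) (K : ℕ) := List (PosK V K) → PMF V

/-- A strategy is memoryless if the distribution it assigns depends only on the
current (i.e. most recent) position. -/
def MemorylessK {K : ℕ} (π : List (PosK V K) → PMF (Fin K → V)) : Prop :=
  ∀ h₁ h₂ : List (PosK V K), h₁.getLast? = h₂.getLast? → π h₁ = π h₂

/-- The CCCR transition function for `K` cops: both players move simultaneously, each
token within its closed neighborhood (illegal moves are ignored); a capture position is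
absorbing; if a cop and the robber swap adjacent vertices, the robber is captured
\"en passant\". -/
def ccStep (G : SimpleGraph V) [DecidableRel G.Adj] {K : ℕ}
    (p : PosK V K) (u : Fin K → V) (w : V) : PosK V K :=
  if ∃ i, p.1 i = p.2 then p
  else
    let u' : Fin K → V := fun i => if u i ∈ nbhd G (p.1 i) then u i else p.1 i
    let w' : V := if w ∈ nbhd G p.2 then w else p.2
    if ∃ i, u' i = p.2 ∧ w' = p.1 i then (u', p.2) else (u', w')

/-- The distribution over histories of the first `t+1` positions of CCCR, induced by a
pair of randomized strategies and an initial position. -/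
def ccPlay (G : SimpleGraph V) [DecidableRel G.Adj] {K : ℕ}
    (πC : CCCop V K) (πR : CCRob V K) (init : PosK V K) : ℕ → PMF (List (PosK V K))
  | 0 => PMF.pure [init]
  | (t+1) => (ccPlay G πC πR init t).bind fun h =>
      (πC h).bind fun u => (πR h).bind fun w =>
        PMF.pure (h ++ [ccStep G (h.getLast?.getD init) u w])

/-- The probability that the robber is still free (not captured) after round `t`. -/
def ccFreeProb (G : SimpleGraph V) [DecidableRel G.Adj] {K : ℕ}
    (πC : CCCop V K) (πR : CCRob V K) (init : PosK V K) (t : ℕ) : ENNReal :=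
  (ccPlay G πC πR init t).toOuterMeasure
    {h | ∀ i, (h.getLast?.getD init).1 i ≠ (h.getLast?.getD init).2}

/-- `K` cops suffice in the concurrent game: the cop player has a strategy ensuring
that, from every initial position and against every robber strategy, capture occurs
with probability one (the set of infinite histories avoiding capture has probability
zero). -/
def ccCopWin (G : SimpleGraph V) [DecidableRel G.Adj] (K : ℕ) : Prop :=
  ∃ πC : CCCop V K, ∀ init : PosK V K, ∀ πR : CCRob V K,
    (⨅ t : ℕ, ccFreeProb G πC πR init t) = 0

/-- The concurrent cop number `c̃(G)`. -/
def ccopNumber (G : SimpleGraph V) [DecidableRel G.Adj] : ℕ :=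
  sInf {K | ccCopWin G K}

/-! Call a turn-based position with the robber to move cop-winning if the cop can force the
robber into his closed neighbourhood. From a position that is not cop-winning the robber has a
move that keeps the position non-cop-winning whatever the cop answers, even knowing that move;
playing it in the concurrent game, where the cop does not know it, the robber is never caught.
So if one cop wins the concurrent game, every position is cop-winning, and in the turn-based
game the cop who moves onto the robber when possible, and otherwise to a neighbour minimising
the number of rounds still needed, catches every robber. -/

/-- With the cop at `u`, the robber at `v` and the robber to move, the cop wins within `n`
rounds: within `n` robber moves the robber must step into `N[u]`, where the cop captures him. -/
def CopWinsWithin (G : SimpleGraph V) [DecidableRel G.Adj] : ℕ → V → V → Prop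
  | 0, _, _ => False
  | n + 1, u, v => ∀ v' ∈ nbhd G v,
      v' ∈ nbhd G u ∨ ∃ u' ∈ nbhd G u, CopWinsWithin G n u' v'

def CopWins (G : SimpleGraph V) [DecidableRel G.Adj] (u v : V) : Prop :=
  ∃ n, CopWinsWithin G n u v

/-- Junk value `0` when `¬CopWins G u v`. -/
def copWinRank (G : SimpleGraph V) [DecidableRel G.Adj] (u v : V) : ℕ :=
  sInf {n | CopWinsWithin G n u v}

def chaseMove (G : SimpleGraph V) [DecidableRel G.Adj] (u v : V) : V :=
  if v ∈ nbhd G u then v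
  else Function.argminOn (copWinRank G · v) (nbhd G u : Set V) (nbhd_nonempty G u)

def chaseStrategy (G : SimpleGraph V) [DecidableRel G.Adj] (a : V) : TBCop V 1 :=
  (fun _ => a, fun h _ => chaseMove G ((h.getLast?.getD (fun _ => a, a)).1 0)
    (h.getLast?.getD (fun _ => a, a)).2)

open Classical in
def escapeMove (G : SimpleGraph V) [DecidableRel G.Adj] (u v : V) : V :=
  if h : ∃ v' ∈ nbhd G v, v' ∉ nbhd G u ∧ ∀ u' ∈ nbhd G u, ¬CopWins G u' v' then
    h.choose
  else v

section

variable {G : SimpleGraph V} [DecidableRel G.Adj]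

lemma mem_nbhd_self (u : V) : u ∈ nbhd G u :=
  mem_insert_self u _

lemma ite_mem_nbhd (x y : V) : (if x ∈ nbhd G y then x else y) ∈ nbhd G y := by
  split_ifs with h
  exacts [h, mem_nbhd_self y]

lemma CopWinsWithin.mono {m n : ℕ} {u v : V} (hmn : m ≤ n) (h : CopWinsWithin G m u v) :
    CopWinsWithin G n u v := by
  induction m generalizing n u v with
  | zero => exact h.elim
  | succ m ih =>
    obtain ⟨n, rfl⟩ := Nat.exists_eq_add_one.2 (Nat.zero_lt_of_lt hmn)
    intro v' hv'
    exact (h v' hv').imp_right fun ⟨u', hu', hw⟩ => ⟨u', hu', ih (by omega) hw⟩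

lemma copWins_iff_eventually {u v : V} :
    CopWins G u v ↔ ∀ᶠ n in atTop, CopWinsWithin G n u v :=
  ⟨fun ⟨m, hm⟩ => eventually_atTop.2 ⟨m, fun _ hmn => hm.mono hmn⟩,
    fun h => h.exists⟩

lemma copWins_self (v : V) : CopWins G v v :=
  ⟨1, fun _ hv' => Or.inl hv'⟩

lemma ne_of_not_copWins {u v : V} (h : ¬CopWins G u v) : u ≠ v := by
  rintro rfl
  exact h (copWins_self u)

lemma exists_escape {u v : V} (h : ¬CopWins G u v) :
    ∃ v' ∈ nbhd G v, v' ∉ nbhd G u ∧ ∀ u' ∈ nbhd G u, ¬CopWins G u' v' := by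
  by_contra! hlost
  have hwin : ∀ᶠ n in atTop, ∀ v' ∈ nbhd G v,
      v' ∈ nbhd G u ∨ ∃ u' ∈ nbhd G u, CopWinsWithin G n u' v' := by
    refine (eventually_all_finset _).2 fun v' hv' => ?_
    by_cases hu : v' ∈ nbhd G u
    · exact .of_forall fun _ => .inl hu
    · obtain ⟨u', hu', hw⟩ := hlost v' hv' hu
      exact (copWins_iff_eventually.1 hw).mono fun _ hn => .inr ⟨u', hu', hn⟩
  obtain ⟨n, hn⟩ := hwin.exists
  exact h ⟨n + 1, hn⟩

lemma copWinsWithin_copWinRank {u v : V} (h : CopWins G u v) :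
    CopWinsWithin G (copWinRank G u v) u v :=
  Nat.sInf_mem h

lemma copWinRank_le {n : ℕ} {u v : V} (h : CopWinsWithin G n u v) : copWinRank G u v ≤ n :=
  Nat.sInf_le h

lemma chaseMove_mem (u v : V) : chaseMove G u v ∈ nbhd G u := by
  unfold chaseMove
  split_ifs with h
  exacts [h, Function.argminOn_mem (copWinRank G · v) _ _]

lemma chaseMove_of_mem {u v : V} (h : v ∈ nbhd G u) : chaseMove G u v = v :=
  if_pos h

lemma copWinsWithin_chaseMove (hall : ∀ u v : V, CopWins G u v) {n : ℕ} {u u' v : V}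
    (hv : v ∉ nbhd G u) (hu' : u' ∈ nbhd G u) (h : CopWinsWithin G n u' v) :
    CopWinsWithin G n (chaseMove G u v) v := by
  have hrank : copWinRank G (chaseMove G u v) v ≤ copWinRank G u' v := by
    rw [chaseMove, if_neg hv]
    exact Function.argminOn_le (copWinRank G · v) _ (Finset.mem_coe.2 hu')
  exact (copWinsWithin_copWinRank (hall _ _)).mono (hrank.trans (copWinRank_le h))

section TurnBased

variable {K : ℕ} (sc : TBCop V K) (sr : TBRob V K) (t : ℕ)

lemma getD_tbPlay (d : PosK V K) : (tbPlay G sc sr t).getLast?.getD d = tbPos G sc sr t := by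
  cases t <;> simp [tbPos, tbPlay]

lemma tbPos_succ_fst (i : Fin K) :
    (tbPos G sc sr (t + 1)).1 i =
      if sc.2 (tbPlay G sc sr t) i ∈ nbhd G ((tbPos G sc sr t).1 i) then sc.2 (tbPlay G sc sr t) i
      else (tbPos G sc sr t).1 i := by
  conv_lhs => rw [tbPos, tbPlay]
  simp only [List.getLast?_concat, Option.getD_some]
  rfl

lemma tbPos_succ_snd_mem : (tbPos G sc sr (t + 1)).2 ∈ nbhd G (tbPos G sc sr t).2 := by
  simpa [tbPos, tbPlay] using ite_mem_nbhd _ _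

end TurnBased

lemma tbPos_chaseStrategy_succ (a : V) (sr : TBRob V 1) (t : ℕ) :
    (tbPos G (chaseStrategy G a) sr (t + 1)).1 0 =
      chaseMove G ((tbPos G (chaseStrategy G a) sr t).1 0)
        (tbPos G (chaseStrategy G a) sr t).2 := by
  rw [tbPos_succ_fst]
  simp only [chaseStrategy, getD_tbPlay]
  exact if_pos (chaseMove_mem _ _)

lemma tbCaptured_chaseStrategy_of_copWinsWithin (hall : ∀ u v : V, CopWins G u v) (a : V)
    (sr : TBRob V 1) (m t : ℕ)
    (h : CopWinsWithin G m ((tbPos G (chaseStrategy G a) sr (t + 1)).1 0)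
      (tbPos G (chaseStrategy G a) sr t).2) :
    tbCaptured G (chaseStrategy G a) sr := by
  induction m generalizing t with
  | zero => exact h.elim
  | succ m ih =>
    set p := tbPos G (chaseStrategy G a) sr
    have hnext := tbPos_chaseStrategy_succ (G := G) a sr (t + 1)
    by_cases hcatch : (p (t + 1)).2 ∈ nbhd G ((p (t + 1)).1 0)
    · exact ⟨t + 1, 0, .inr (hnext.trans (chaseMove_of_mem hcatch))⟩
    · obtain ⟨u', hu', hw⟩ := (h _ (tbPos_succ_snd_mem _ _ t)).resolve_left hcatch
      exact ih (t + 1) (hnext ▸ copWinsWithin_chaseMove hall hcatch hu' hw)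

lemma tbCaptured_chaseStrategy (hall : ∀ u v : V, CopWins G u v) (a : V) (sr : TBRob V 1) :
    tbCaptured G (chaseStrategy G a) sr := by
  set p := tbPos G (chaseStrategy G a) sr
  have hfirst := tbPos_chaseStrategy_succ (G := G) a sr 0
  by_cases hcatch : (p 0).2 ∈ nbhd G ((p 0).1 0)
  · exact ⟨0, 0, .inr (hfirst.trans (chaseMove_of_mem hcatch))⟩
  · refine tbCaptured_chaseStrategy_of_copWinsWithin hall a sr
      (copWinRank G ((p 0).1 0) (p 0).2) 0 ?_
    rw [hfirst]
    exact copWinsWithin_chaseMove hall hcatch (mem_nbhd_self _)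
      (copWinsWithin_copWinRank (hall _ _))

lemma not_tbCopWin_zero [Nonempty V] : ¬tbCopWin G 0 := by
  rintro ⟨sc, hsc⟩
  obtain ⟨-, i, -⟩ := hsc (Classical.arbitrary _)
  exact i.elim0

lemma copNumber_eq_one [Nonempty V] (h : tbCopWin G 1) : copNumber G = 1 := by
  refine le_antisymm (Nat.sInf_le h) (Nat.one_le_iff_ne_zero.2 fun h0 => ?_)
  rcases Nat.sInf_eq_zero.1 h0 with h0 | hempty
  · exact not_tbCopWin_zero h0
  · exact hempty.subset h

lemma tbCopWin_one_of_forall_copWins [Nonempty V] (hall : ∀ u v : V, CopWins G u v) :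
    tbCopWin G 1 :=
  ⟨chaseStrategy G (Classical.arbitrary V), tbCaptured_chaseStrategy hall _⟩

lemma escapeMove_spec {u v : V} (h : ¬CopWins G u v) :
    escapeMove G u v ∈ nbhd G v ∧ escapeMove G u v ∉ nbhd G u ∧
      ∀ u' ∈ nbhd G u, ¬CopWins G u' (escapeMove G u v) := by
  rw [escapeMove, dif_pos (exists_escape h)]
  exact (exists_escape h).choose_spec

lemma not_copWins_ccStep_escapeMove {p : PosK V 1} (hp : ¬CopWins G (p.1 0) p.2)
    (c : Fin 1 → V) :
    ¬CopWins G ((ccStep G p c (escapeMove G (p.1 0) p.2)).1 0)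
      (ccStep G p c (escapeMove G (p.1 0) p.2)).2 := by
  obtain ⟨hmem, hfar, hsafe⟩ := escapeMove_spec hp
  have hno_swap : escapeMove G (p.1 0) p.2 ≠ p.1 0 := by
    rintro he
    rw [he] at hfar
    exact hfar (mem_nbhd_self _)
  have hnot_caught : ¬∃ i, p.1 i = p.2 := by
    simpa only [Fin.exists_fin_one] using ne_of_not_copWins hp
  rw [ccStep, if_neg hnot_caught]
  dsimp only
  rw [if_pos hmem, if_neg (by simp only [Fin.exists_fin_one, hno_swap, and_false,
    not_false_eq_true])]
  exact hsafe _ (ite_mem_nbhd _ _)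

lemma last_of_mem_support_ccPlay {K : ℕ} (πC : CCCop V K) (πR : CCRob V K) (init : PosK V K)
    (P : PosK V K → Prop) (hinit : P init)
    (hstep : ∀ h c, ∀ w ∈ (πR h).support,
      P (h.getLast?.getD init) → P (ccStep G (h.getLast?.getD init) c w)) (t : ℕ) :
    ∀ h ∈ (ccPlay G πC πR init t).support, P (h.getLast?.getD init) := by
  induction t with
  | zero =>
    intro h hh
    rw [ccPlay, PMF.support_pure, Set.mem_singleton_iff] at hh
    simpa [hh] using hinit
  | succ t ih =>
    intro h hh
    simp only [ccPlay, PMF.mem_support_bind_iff, PMF.mem_support_pure_iff] at hh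
    obtain ⟨h', hh', c, -, w, hw, rfl⟩ := hh
    simpa using hstep h' c w hw (ih h' hh')

lemma not_ccCopWin_one_of_not_copWins {u v : V} (h : ¬CopWins G u v) : ¬ccCopWin G 1 := by
  rintro ⟨πC, hπC⟩
  set init : PosK V 1 := (fun _ => u, v)
  set πR : CCRob V 1 := fun hist =>
    PMF.pure (escapeMove G ((hist.getLast?.getD init).1 0) (hist.getLast?.getD init).2)
  have hfree (t : ℕ) : ccFreeProb G πC πR init t = 1 := by
    refine (PMF.toOuterMeasure_apply_eq_one_iff _ _).2 fun hist hhist i => ?_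
    refine Subsingleton.elim i 0 ▸ ne_of_not_copWins (G := G) ?_
    refine last_of_mem_support_ccPlay πC πR init (fun p => ¬CopWins G (p.1 0) p.2) h ?_ t
      _ hhist
    rintro hist c w hw hp
    rw [(PMF.mem_support_pure_iff _ _).1 hw]
    exact not_copWins_ccStep_escapeMove hp c
  simpa [hfree] using hπC init πR

lemma nonempty_of_ccCopWin_one (h : ccCopWin G 1) : Nonempty V :=
  let ⟨πC, _⟩ := h
  ⟨(πC []).support_nonempty.some 0⟩

end

theorem copNumber_eq_one_of_ccopNumber_eq_one_general (G : SimpleGraph V) [DecidableRel G.Adj]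
    (h : ccopNumber G = 1) :
    copNumber G = 1 := by
  have hwin : ccCopWin G 1 := h ▸ Nat.sInf_mem (Nat.nonempty_of_sInf_eq_succ h)
  have := nonempty_of_ccCopWin_one hwin
  have hall : ∀ u v : V, CopWins G u v := fun u v =>
    by_contra fun huv => not_ccCopWin_one_of_not_copWins huv hwin
  exact copNumber_eq_one (tbCopWin_one_of_forall_copWins hall)

/-- if the concurrent cop number `c̃(G)` equals `1` then the cop number
`c(G)` equals `1`. -/
theorem copNumber_eq_one_of_ccopNumber_eq_one (G : SimpleGraph V) [DecidableRel G.Adj]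
    (hconn : G.Connected) (h : ccopNumber G = 1) :
    copNumber G = 1 :=
  copNumber_eq_one_of_ccopNumber_eq_one_general G h
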